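/- Let β, h, m, q₀, q₁, p₁ be real numbers with 0 ≤ q₀ ≤ q₁ and p₁ ≥ 0. Define H(u, v) = h + (β/2)(m − q₁) + √q₀ · u + √(q₁ − q₀) · v, ℓ(u,v) = 1/(1 + e^{−βH(u,v)}) ∈ [0,1], and for measurable g the nested tilted Gaussian averages ⟨g⟩_v(u) = ∫ φ(v) (1+e^{βH(u,v)})^{p₁} g(u,v) dv / ∫ φ(v) (1+e^{βH(u,v)})^{p₁} dv and ⟨f⟩_u = ∫ φ(u) f(u) du. Then ⟨⟨ℓ³⟩_v⟩_u ≥ ⟨⟨ℓ⁴⟩_v⟩_u and ⟨⟨ℓ⁴⟩_v⟩_u ≥ ⟨(⟨ℓ²⟩_v)²⟩_u; consequently the quantity p₁(⟨⟨ℓ⁴⟩_v⟩_u − ⟨(⟨ℓ²⟩_v)²⟩_u) + 4(⟨⟨ℓ³⟩_v⟩_u − ⟨⟨ℓ⁴⟩_v⟩_u) is nonnegative, so that the paper's Type-I stability condition, which is linear in the 2-RSB Parisi parameter x with this quantity as the coefficient of x, is most stringent at x = 1. -/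

import Mathlib

/-!
For each `u`, `⟨·⟩_v` is an average against a probability density in `v`. Since `0 ≤ ℓ ≤ 1`,
`ℓ⁴ ≤ ℓ³` pointwise, and Cauchy–Schwarz for that density gives `⟨ℓ²⟩_v² ≤ ⟨ℓ⁴⟩_v`. Averaging
over `u` keeps both inequalities, so the coefficient is a nonnegative combination of nonnegative
terms. The only analytic input is the integrability of the tilted weight `φ(v) (1 + e^{a + b v})^p`,
which is dominated by `2^|p| φ(v) (1 + e^{|p| (a + b v)})`.
-/

open MeasureTheory Real

/-- The standard Gaussian density `φ(t) = e^{-t²/2}/√(2π)` on `ℝ`. -/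
noncomputable def gaussPDF (t : ℝ) : ℝ := Real.exp (-t ^ 2 / 2) / Real.sqrt (2 * Real.pi)

/-- The 1-RSB effective field `H(u,v) = h + (β/2)(m - q₁) + √q₀ u + √(q₁-q₀) v`. -/
noncomputable def Hfield (β h m q₀ q₁ : ℝ) (u v : ℝ) : ℝ :=
  h + β / 2 * (m - q₁) + Real.sqrt q₀ * u + Real.sqrt (q₁ - q₀) * v

/-- The logistic weight `ℓ(u,v) = 1/(1 + e^{-βH(u,v)}) ∈ [0,1]`. -/
noncomputable def ellF (β h m q₀ q₁ : ℝ) (u v : ℝ) : ℝ :=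
  1 / (1 + Real.exp (-(β * Hfield β h m q₀ q₁ u v)))

/-- Inner tilted Gaussian average
`⟨g⟩_v(u) = ∫ φ(v) (1+e^{βH})^{p₁} g(u,v) dv / ∫ φ(v) (1+e^{βH})^{p₁} dv`. -/
noncomputable def avgV (β h m q₀ q₁ p₁ : ℝ) (g : ℝ → ℝ → ℝ) (u : ℝ) : ℝ :=
  (∫ v : ℝ, gaussPDF v * (1 + Real.exp (β * Hfield β h m q₀ q₁ u v)) ^ p₁ * g u v) /
  (∫ v : ℝ, gaussPDF v * (1 + Real.exp (β * Hfield β h m q₀ q₁ u v)) ^ p₁)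

/-- Outer Gaussian average `⟨f⟩_u = ∫ φ(u) f(u) du`. -/
noncomputable def avgU (f : ℝ → ℝ) : ℝ := ∫ u : ℝ, gaussPDF u * f u

section WeightedIntegral

variable {α : Type*} [MeasurableSpace α] {μ : Measure α} {w f g : α → ℝ}

theorem integrable_mul_of_mem_Icc (hw : Integrable w μ) (hf : AEStronglyMeasurable f μ)
    (hf0 : 0 ≤ f) (hf1 : f ≤ 1) : Integrable (fun x => w x * f x) μ :=
  hw.mul_bdd hf (c := 1) <| .of_forall fun x => by
    rw [Real.norm_of_nonneg (hf0 x)]; exact hf1 x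

theorem integral_mul_mono_of_le_one (hw : 0 ≤ w) (hwi : Integrable w μ) (hf : 0 ≤ f)
    (hfg : f ≤ g) (hg : AEStronglyMeasurable g μ) (hg1 : g ≤ 1) :
    ∫ x, w x * f x ∂μ ≤ ∫ x, w x * g x ∂μ :=
  integral_mono_of_nonneg (.of_forall fun x => mul_nonneg (hw x) (hf x))
    (integrable_mul_of_mem_Icc hwi hg (hf.trans hfg) hg1)
    (.of_forall fun x => mul_le_mul_of_nonneg_left (hfg x) (hw x))

theorem sq_integral_mul_le_integral_mul_sq_mul_integral (hw : 0 ≤ w) (hwi : Integrable w μ)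
    (hwf : Integrable (fun x => w x * f x) μ) (hwf2 : Integrable (fun x => w x * f x ^ 2) μ) :
    (∫ x, w x * f x ∂μ) ^ 2 ≤ (∫ x, w x * f x ^ 2 ∂μ) * ∫ x, w x ∂μ := by
  have hquad : ∀ t : ℝ, 0 ≤ (∫ x, w x ∂μ) * (t * t) + (-2 * ∫ x, w x * f x ∂μ) * t
      + ∫ x, w x * f x ^ 2 ∂μ := fun t => by
    have hexpand : ∫ x, w x * (f x - t) ^ 2 ∂μ = (∫ x, w x ∂μ) * (t * t)
        + (-2 * ∫ x, w x * f x ∂μ) * t + ∫ x, w x * f x ^ 2 ∂μ := by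
      simp_rw [show ∀ x, w x * (f x - t) ^ 2
          = (t * t) * w x + (-2 * t) * (w x * f x) + w x * f x ^ 2 from fun x => by ring]
      rw [integral_add ?_ hwf2, integral_add (hwi.const_mul _) (hwf.const_mul _),
        integral_const_mul, integral_const_mul]
      · ring
      · exact (hwi.const_mul _).add (hwf.const_mul _)
    exact hexpand ▸ integral_nonneg fun x => mul_nonneg (hw x) (sq_nonneg _)
  have := discrim_le_zero hquad
  rw [discrim] at this
  nlinarith

theorem sq_integral_mul_div_integral_le (hw : 0 ≤ w) (hwi : Integrable w μ)
    (hwf : Integrable (fun x => w x * f x) μ) (hwf2 : Integrable (fun x => w x * f x ^ 2) μ) :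
    ((∫ x, w x * f x ∂μ) / ∫ x, w x ∂μ) ^ 2 ≤ (∫ x, w x * f x ^ 2 ∂μ) / ∫ x, w x ∂μ := by
  rcases (integral_nonneg hw).eq_or_lt with hD | hD
  · rw [← hD]; simp
  rw [div_pow, div_le_div_iff₀ (by positivity) hD]
  nlinarith [sq_integral_mul_le_integral_mul_sq_mul_integral hw hwi hwf hwf2]

end WeightedIntegral

theorem gaussPDF_pos (t : ℝ) : 0 < gaussPDF t :=
  div_pos (exp_pos _) (sqrt_pos.2 (by positivity))

theorem continuous_gaussPDF : Continuous gaussPDF := by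
  unfold gaussPDF; fun_prop

theorem integrable_gaussPDF_mul_exp (k : ℝ) :
    Integrable (fun v => gaussPDF v * exp (k * v)) := by
  have hshift : Integrable (fun v : ℝ => exp (-(1 / 2 : ℝ) * (v - k) ^ 2)) :=
    (integrable_exp_neg_mul_sq (by norm_num)).comp_sub_right k
  refine (hshift.const_mul (exp (k ^ 2 / 2) / sqrt (2 * π))).congr (.of_forall fun v => ?_)
  -- completing the square: `-v²/2 + k v = k²/2 - (v - k)²/2`
  simp only [gaussPDF, div_mul_eq_mul_div, ← exp_add]
  ring_nf

theorem integrable_gaussPDF : Integrable gaussPDF := by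
  simpa using integrable_gaussPDF_mul_exp 0

theorem one_add_exp_rpow_le (p x : ℝ) : (1 + exp x) ^ p ≤ 2 ^ |p| * (1 + exp (|p| * x)) := by
  have hq := abs_nonneg p
  calc (1 + exp x) ^ p ≤ (1 + exp x) ^ |p| :=
        rpow_le_rpow_of_exponent_le (by linarith [exp_pos x]) (le_abs_self p)
    _ ≤ 2 ^ |p| * (1 + exp (|p| * x)) := by
        rcases le_total x 0 with hx | hx
        · have hbase : 1 + exp x ≤ 2 := by linarith [exp_le_one_iff.2 hx]
          calc (1 + exp x) ^ |p| ≤ 2 ^ |p| := rpow_le_rpow (by positivity) hbase hq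
            _ ≤ 2 ^ |p| * (1 + exp (|p| * x)) :=
                le_mul_of_one_le_right (by positivity) (by linarith [exp_pos (|p| * x)])
        · have hbase : 1 + exp x ≤ 2 * exp x := by linarith [one_le_exp hx]
          calc (1 + exp x) ^ |p| ≤ (2 * exp x) ^ |p| := rpow_le_rpow (by positivity) hbase hq
            _ = 2 ^ |p| * exp (|p| * x) := by
                rw [mul_rpow zero_le_two (exp_pos x).le, ← exp_mul, mul_comm x]
            _ ≤ 2 ^ |p| * (1 + exp (|p| * x)) := by gcongr; linarith

theorem integrable_gaussPDF_mul_one_add_exp_rpow (a b p : ℝ) :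
    Integrable (fun v => gaussPDF v * (1 + exp (a + b * v)) ^ p) := by
  have hdom : Integrable (fun v => 2 ^ |p| *
      (gaussPDF v + exp (|p| * a) * (gaussPDF v * exp (|p| * b * v)))) :=
    (integrable_gaussPDF.add ((integrable_gaussPDF_mul_exp _).const_mul _)).const_mul _
  have hcont : Continuous (fun v => gaussPDF v * (1 + exp (a + b * v)) ^ p) :=
    continuous_gaussPDF.mul <| (by fun_prop : Continuous fun v => 1 + exp (a + b * v)).rpow_const
      fun v => .inl (by positivity)
  refine hdom.mono' hcont.aestronglyMeasurable (.of_forall fun v => ?_)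
  have hφ := gaussPDF_pos v
  rw [norm_of_nonneg (by positivity)]
  calc gaussPDF v * (1 + exp (a + b * v)) ^ p
      ≤ gaussPDF v * (2 ^ |p| * (1 + exp (|p| * (a + b * v)))) :=
        mul_le_mul_of_nonneg_left (one_add_exp_rpow_le _ _) hφ.le
    _ = 2 ^ |p| * (gaussPDF v + exp (|p| * a) * (gaussPDF v * exp (|p| * b * v))) := by
        rw [mul_add |p|, exp_add]; ring_nf

section TiltedAverage

variable (β h m q₀ q₁ p₁ : ℝ)

noncomputable def tiltedWeight (u v : ℝ) : ℝ :=
  gaussPDF v * (1 + exp (β * Hfield β h m q₀ q₁ u v)) ^ p₁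

variable {β h m q₀ q₁ p₁}

theorem tiltedWeight_nonneg (u : ℝ) : 0 ≤ tiltedWeight β h m q₀ q₁ p₁ u := fun v =>
  mul_nonneg (gaussPDF_pos v).le (rpow_nonneg (by positivity) _)

theorem continuous_tiltedWeight : Continuous (Function.uncurry (tiltedWeight β h m q₀ q₁ p₁)) :=
  (continuous_gaussPDF.comp continuous_snd).mul <|
    (by unfold Hfield; fun_prop : Continuous fun x : ℝ × ℝ =>
      1 + exp (β * Hfield β h m q₀ q₁ x.1 x.2)).rpow_const fun _ => .inl (by positivity)

theorem integrable_tiltedWeight (u : ℝ) : Integrable (tiltedWeight β h m q₀ q₁ p₁ u) :=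
  (integrable_gaussPDF_mul_one_add_exp_rpow (β * (h + β / 2 * (m - q₁) + sqrt q₀ * u))
    (β * sqrt (q₁ - q₀)) p₁).congr <| .of_forall fun v => by
      simp only [tiltedWeight, Hfield, mul_add, add_assoc, mul_assoc]

variable {f g : ℝ → ℝ → ℝ}

theorem integrable_tiltedWeight_mul (hg : Measurable (Function.uncurry g))
    (hg0 : ∀ u v, 0 ≤ g u v) (hg1 : ∀ u v, g u v ≤ 1) (u : ℝ) :
    Integrable (fun v => tiltedWeight β h m q₀ q₁ p₁ u v * g u v) :=
  integrable_mul_of_mem_Icc (integrable_tiltedWeight u)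
    (hg.comp measurable_prodMk_left).aestronglyMeasurable (hg0 u) (hg1 u)

theorem measurable_avgV (hg : Measurable (Function.uncurry g)) :
    Measurable (avgV β h m q₀ q₁ p₁ g) := by
  have hnum : StronglyMeasurable fun u => ∫ v, tiltedWeight β h m q₀ q₁ p₁ u v * g u v :=
    (continuous_tiltedWeight.measurable.mul hg).stronglyMeasurable.integral_prod_right'
  have hden : StronglyMeasurable fun u => ∫ v, tiltedWeight β h m q₀ q₁ p₁ u v :=
    continuous_tiltedWeight.stronglyMeasurable.integral_prod_right'
  exact hnum.measurable.div hden.measurable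

theorem avgV_nonneg (hg0 : ∀ u v, 0 ≤ g u v) (u : ℝ) : 0 ≤ avgV β h m q₀ q₁ p₁ g u :=
  div_nonneg (integral_nonneg fun v => mul_nonneg (tiltedWeight_nonneg u v) (hg0 u v))
    (integral_nonneg (tiltedWeight_nonneg u))

theorem avgV_mono (hf0 : ∀ u v, 0 ≤ f u v) (hfg : ∀ u v, f u v ≤ g u v)
    (hg : Measurable (Function.uncurry g)) (hg1 : ∀ u v, g u v ≤ 1) (u : ℝ) :
    avgV β h m q₀ q₁ p₁ f u ≤ avgV β h m q₀ q₁ p₁ g u :=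
  div_le_div_of_nonneg_right
    (integral_mul_mono_of_le_one (tiltedWeight_nonneg u) (integrable_tiltedWeight u)
      (hf0 u) (hfg u) (hg.comp measurable_prodMk_left).aestronglyMeasurable (hg1 u))
    (integral_nonneg (tiltedWeight_nonneg u))

theorem avgV_le_one (hg0 : ∀ u v, 0 ≤ g u v) (hg1 : ∀ u v, g u v ≤ 1) (u : ℝ) :
    avgV β h m q₀ q₁ p₁ g u ≤ 1 := by
  refine div_le_one_of_le₀ ?_ (integral_nonneg (tiltedWeight_nonneg u))
  calc ∫ v, tiltedWeight β h m q₀ q₁ p₁ u v * g u v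
      ≤ ∫ v, tiltedWeight β h m q₀ q₁ p₁ u v * 1 :=
        integral_mul_mono_of_le_one (tiltedWeight_nonneg u) (integrable_tiltedWeight u)
          (hg0 u) (hg1 u) aestronglyMeasurable_const (fun _ => le_rfl)
    _ = ∫ v, tiltedWeight β h m q₀ q₁ p₁ u v := by simp_rw [mul_one]

theorem sq_avgV_le (hg : Measurable (Function.uncurry g)) (hg0 : ∀ u v, 0 ≤ g u v)
    (hg1 : ∀ u v, g u v ≤ 1) (u : ℝ) :
    avgV β h m q₀ q₁ p₁ g u ^ 2 ≤ avgV β h m q₀ q₁ p₁ (fun u v => g u v ^ 2) u :=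
  sq_integral_mul_div_integral_le (tiltedWeight_nonneg u) (integrable_tiltedWeight u)
    (integrable_tiltedWeight_mul hg hg0 hg1 u)
    (integrable_tiltedWeight_mul (hg.pow_const 2) (fun _ _ => sq_nonneg _)
      (fun u v => pow_le_one₀ (hg0 u v) (hg1 u v)) u)

end TiltedAverage

theorem avgU_mono {f g : ℝ → ℝ} (hf0 : ∀ u, 0 ≤ f u) (hfg : ∀ u, f u ≤ g u)
    (hg : Measurable g) (hg1 : ∀ u, g u ≤ 1) : avgU f ≤ avgU g :=
  integral_mul_mono_of_le_one (fun u => (gaussPDF_pos u).le) integrable_gaussPDF hf0 hfg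
    hg.aestronglyMeasurable hg1

section Logistic

variable (β h m q₀ q₁ : ℝ)

theorem ellF_nonneg (u v : ℝ) : 0 ≤ ellF β h m q₀ q₁ u v := by
  unfold ellF; positivity

theorem ellF_le_one (u v : ℝ) : ellF β h m q₀ q₁ u v ≤ 1 :=
  div_le_one_of_le₀ (by linarith [exp_pos (-(β * Hfield β h m q₀ q₁ u v))]) (by positivity)

theorem continuous_ellF : Continuous (Function.uncurry (ellF β h m q₀ q₁)) :=
  continuous_const.div (by unfold Hfield; fun_prop) fun _ => by positivity

end Logistic

theorem typeI_stability_coefficient_nonneg_general (β h m q₀ q₁ p₁ : ℝ)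
    (hp₁ : 0 ≤ p₁) :
    avgU (avgV β h m q₀ q₁ p₁ (fun u v => (ellF β h m q₀ q₁ u v) ^ 3))
        ≥ avgU (avgV β h m q₀ q₁ p₁ (fun u v => (ellF β h m q₀ q₁ u v) ^ 4)) ∧
    avgU (avgV β h m q₀ q₁ p₁ (fun u v => (ellF β h m q₀ q₁ u v) ^ 4))
        ≥ avgU (fun u => (avgV β h m q₀ q₁ p₁ (fun u v => (ellF β h m q₀ q₁ u v) ^ 2) u) ^ 2) ∧
    0 ≤ p₁ * (avgU (avgV β h m q₀ q₁ p₁ (fun u v => (ellF β h m q₀ q₁ u v) ^ 4))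
            - avgU (fun u =>
                (avgV β h m q₀ q₁ p₁ (fun u v => (ellF β h m q₀ q₁ u v) ^ 2) u) ^ 2))
        + 4 * (avgU (avgV β h m q₀ q₁ p₁ (fun u v => (ellF β h m q₀ q₁ u v) ^ 3))
            - avgU (avgV β h m q₀ q₁ p₁ (fun u v => (ellF β h m q₀ q₁ u v) ^ 4))) := by
  have hmeas (k : ℕ) : Measurable (Function.uncurry fun u v => ellF β h m q₀ q₁ u v ^ k) :=
    ((continuous_ellF β h m q₀ q₁).pow k).measurable
  have hnonneg (k : ℕ) (u v : ℝ) : 0 ≤ ellF β h m q₀ q₁ u v ^ k :=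
    pow_nonneg (ellF_nonneg ..) k
  have hle_one (k : ℕ) (u v : ℝ) : ellF β h m q₀ q₁ u v ^ k ≤ 1 :=
    pow_le_one₀ (ellF_nonneg ..) (ellF_le_one ..)
  have hpow_anti (u v : ℝ) : ellF β h m q₀ q₁ u v ^ 4 ≤ ellF β h m q₀ q₁ u v ^ 3 :=
    pow_le_pow_of_le_one (ellF_nonneg ..) (ellF_le_one ..) (by norm_num)
  have h43 : avgU (avgV β h m q₀ q₁ p₁ (fun u v => ellF β h m q₀ q₁ u v ^ 4))
      ≤ avgU (avgV β h m q₀ q₁ p₁ (fun u v => ellF β h m q₀ q₁ u v ^ 3)) :=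
    avgU_mono (avgV_nonneg (hnonneg 4)) (avgV_mono (hnonneg 4) hpow_anti (hmeas 3) (hle_one 3))
      (measurable_avgV (hmeas 3)) (avgV_le_one (hnonneg 3) (hle_one 3))
  have h24 : avgU (fun u => avgV β h m q₀ q₁ p₁ (fun u v => ellF β h m q₀ q₁ u v ^ 2) u ^ 2)
      ≤ avgU (avgV β h m q₀ q₁ p₁ (fun u v => ellF β h m q₀ q₁ u v ^ 4)) := by
    refine avgU_mono (fun u => sq_nonneg _) (fun u => ?_) (measurable_avgV (hmeas 4))
      (avgV_le_one (hnonneg 4) (hle_one 4))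
    simpa only [← pow_mul] using sq_avgV_le (hmeas 2) (hnonneg 2) (hle_one 2) u
  exact ⟨h43, h24, add_nonneg (mul_nonneg hp₁ (sub_nonneg.2 h24)) (by linarith)⟩

/-- Monotonicity inequalities for the nested 1-RSB tilted averages:
`⟨⟨ℓ³⟩_v⟩_u ≥ ⟨⟨ℓ⁴⟩_v⟩_u` and `⟨⟨ℓ⁴⟩_v⟩_u ≥ ⟨(⟨ℓ²⟩_v)²⟩_u`; hence the coefficient
`p₁(⟨⟨ℓ⁴⟩_v⟩_u − ⟨(⟨ℓ²⟩_v)²⟩_u) + 4(⟨⟨ℓ³⟩_v⟩_u − ⟨⟨ℓ⁴⟩_v⟩_u)` of the 2-RSB Parisi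
parameter `x` in the Type-I stability condition is nonnegative, so the condition is
most stringent at `x = 1`. -/
theorem typeI_stability_coefficient_nonneg (β h m q₀ q₁ p₁ : ℝ)
    (hq₀ : 0 ≤ q₀) (hq₀₁ : q₀ ≤ q₁) (hp₁ : 0 ≤ p₁) :
    avgU (avgV β h m q₀ q₁ p₁ (fun u v => (ellF β h m q₀ q₁ u v) ^ 3))
        ≥ avgU (avgV β h m q₀ q₁ p₁ (fun u v => (ellF β h m q₀ q₁ u v) ^ 4)) ∧
    avgU (avgV β h m q₀ q₁ p₁ (fun u v => (ellF β h m q₀ q₁ u v) ^ 4))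
        ≥ avgU (fun u => (avgV β h m q₀ q₁ p₁ (fun u v => (ellF β h m q₀ q₁ u v) ^ 2) u) ^ 2) ∧
    0 ≤ p₁ * (avgU (avgV β h m q₀ q₁ p₁ (fun u v => (ellF β h m q₀ q₁ u v) ^ 4))
            - avgU (fun u =>
                (avgV β h m q₀ q₁ p₁ (fun u v => (ellF β h m q₀ q₁ u v) ^ 2) u) ^ 2))
        + 4 * (avgU (avgV β h m q₀ q₁ p₁ (fun u v => (ellF β h m q₀ q₁ u v) ^ 3))
            - avgU (avgV β h m q₀ q₁ p₁ (fun u v => (ellF β h m q₀ q₁ u v) ^ 4))) :=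
  typeI_stability_coefficient_nonneg_general β h m q₀ q₁ p₁ hp₁
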